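/- arXiv:0910.1888 — 4 statements merged into one kernel-verified Lean document; each statement's English description precedes it below -/
import Mathlib

section
/- (Distortion Lemma) Let J₀, J₁, …, J_N be intervals in ℝ and ψ_i : J_i → J_{i+1} (i = 0, …, N−1) orientation-preserving C² diffeomorphisms (ψ_i' > 0). For a diffeomorphism ψ of an interval A define its distortion rate κ(ψ) = ln( max_A ψ' / min_A ψ' ). Then the composition F_{N−1} = ψ_{N−1} ∘ … ∘ ψ₀ satisfies κ(F_{N−1}) ≤ ( max_i max_{x∈J_i} |ψ_i''(x)/ψ_i'(x)| ) · Σ_{k=0}^{N−1} |J_k|. -/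
/-!
Along the orbit, the chain rule turns `ln F'(x) - ln F'(y)` into the sum over `i` of
`ln ψᵢ'(xᵢ) - ln ψᵢ'(yᵢ)`, where `xᵢ, yᵢ ∈ Jᵢ` are the images of `x, y`. Since
`(ln ψᵢ')' = ψᵢ''/ψᵢ'`, the mean value theorem bounds the `i`-th term by `K |Jᵢ|`.
-/

open Real Set Finset

/-- `compChain f n = f (n - 1) ∘ ⋯ ∘ f 0`: the first `n` maps, so the paper's `F_k` is
`compChain f (k + 1)`. -/
def compChain {α : Type*} (f : ℕ → α → α) : ℕ → α → α
  | 0 => id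
  | n + 1 => f n ∘ compChain f n

section compChain

variable {α : Type*} (f : ℕ → α → α)

@[simp]
theorem compChain_zero : compChain f 0 = id := rfl

@[simp]
theorem compChain_succ (n : ℕ) : compChain f (n + 1) = f n ∘ compChain f n := rfl

theorem eq_compChain_succ {F : ℕ → α → α} (h0 : F 0 = f 0)
    (hs : ∀ k, F (k + 1) = f (k + 1) ∘ F k) (k : ℕ) : F k = compChain f (k + 1) := by
  induction k with
  | zero => simp [h0]
  | succ k ih => rw [hs, ih]; rfl

variable {f}

theorem mapsTo_compChain {S : ℕ → Set α} {n : ℕ}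
    (h : ∀ i < n, MapsTo (f i) (S i) (S (i + 1))) : MapsTo (compChain f n) (S 0) (S n) := by
  induction n with
  | zero => exact mapsTo_id _
  | succ n ih => exact (h n n.lt_succ_self).comp (ih fun i hi => h i (by omega))

end compChain

section deriv

variable {𝕜 : Type*} [NontriviallyNormedField 𝕜] {f : ℕ → 𝕜 → 𝕜} {n : ℕ}

theorem differentiable_compChain (h : ∀ i < n, Differentiable 𝕜 (f i)) :
    Differentiable 𝕜 (compChain f n) := by
  induction n with
  | zero => exact differentiable_id
  | succ n ih => exact (h n n.lt_succ_self).comp (ih fun i hi => h i (by omega))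

theorem deriv_compChain (h : ∀ i < n, Differentiable 𝕜 (f i)) (x : 𝕜) :
    deriv (compChain f n) x = ∏ i ∈ range n, deriv (f i) (compChain f i x) := by
  induction n with
  | zero => simp
  | succ n ih =>
    have h' : ∀ i < n, Differentiable 𝕜 (f i) := fun i hi => h i (by omega)
    rw [compChain_succ, deriv_comp x (h n n.lt_succ_self _)
      (differentiable_compChain h' x), ih h', prod_range_succ, mul_comm]

end deriv

theorem abs_log_deriv_sub_le {g : ℝ → ℝ} {a b K : ℝ} (hg : ContDiff ℝ 2 g)
    (hpos : ∀ t ∈ Icc a b, 0 < deriv g t)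
    (hK : ∀ t ∈ Icc a b, |deriv (deriv g) t / deriv g t| ≤ K)
    {x y : ℝ} (hx : x ∈ Icc a b) (hy : y ∈ Icc a b) :
    |log (deriv g x) - log (deriv g y)| ≤ K * |x - y| := by
  have hg' : Differentiable ℝ (deriv g) :=
    (hg.iterate_deriv' 1 1).differentiable one_ne_zero
  have hlog : ∀ t ∈ Icc a b, HasDerivWithinAt (fun s => log (deriv g s))
      (deriv (deriv g) t / deriv g t) (Icc a b) t := fun t ht =>
    ((hg' t).hasDerivAt.log (hpos t ht).ne').hasDerivWithinAt
  simpa only [Real.norm_eq_abs] using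
    (convex_Icc a b).norm_image_sub_le_of_norm_hasDerivWithin_le hlog hK hy hx

theorem log_deriv_sub_le_mul_length {g : ℝ → ℝ} {a b K : ℝ} (hg : ContDiff ℝ 2 g)
    (hpos : ∀ t ∈ Icc a b, 0 < deriv g t)
    (hK : ∀ t ∈ Icc a b, |deriv (deriv g) t / deriv g t| ≤ K)
    {x y : ℝ} (hx : x ∈ Icc a b) (hy : y ∈ Icc a b) :
    log (deriv g x) - log (deriv g y) ≤ K * (b - a) := by
  have hK0 : 0 ≤ K := (abs_nonneg _).trans (hK x hx)
  have hxy : |x - y| ≤ b - a :=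
    abs_sub_le_iff.2 ⟨by linarith [hx.2, hy.1], by linarith [hx.1, hy.2]⟩
  calc log (deriv g x) - log (deriv g y) ≤ K * |x - y| :=
        (le_abs_self _).trans (abs_log_deriv_sub_le hg hpos hK hx hy)
    _ ≤ K * (b - a) := mul_le_mul_of_nonneg_left hxy hK0

theorem log_deriv_compChain_div_le {ψ : ℕ → ℝ → ℝ} {l r : ℕ → ℝ} {n : ℕ}
    {K : ℝ}
    (hsmooth : ∀ i < n, ContDiff ℝ 2 (ψ i))
    (hpos : ∀ i < n, ∀ t ∈ Icc (l i) (r i), 0 < deriv (ψ i) t)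
    (hmaps : ∀ i < n, MapsTo (ψ i) (Icc (l i) (r i)) (Icc (l (i + 1)) (r (i + 1))))
    (hK : ∀ i < n, ∀ t ∈ Icc (l i) (r i), |deriv (deriv (ψ i)) t / deriv (ψ i) t| ≤ K)
    {x y : ℝ} (hx : x ∈ Icc (l 0) (r 0)) (hy : y ∈ Icc (l 0) (r 0)) :
    log (deriv (compChain ψ n) x / deriv (compChain ψ n) y) ≤
      K * ∑ k ∈ range n, (r k - l k) := by
  have hdiff : ∀ i < n, Differentiable ℝ (ψ i) := fun i hi =>
    (hsmooth i hi).differentiable two_ne_zero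
  have horbit : ∀ i < n, ∀ z ∈ Icc (l 0) (r 0), compChain ψ i z ∈ Icc (l i) (r i) :=
    fun i hi z hz => mapsTo_compChain (fun j hj => hmaps j (by omega)) hz
  have hne : ∀ z ∈ Icc (l 0) (r 0), ∀ i ∈ range n, deriv (ψ i) (compChain ψ i z) ≠ 0 :=
    fun z hz i hi => (hpos i (mem_range.1 hi) _ (horbit i (mem_range.1 hi) z hz)).ne'
  rw [deriv_compChain hdiff, deriv_compChain hdiff,
    log_div (prod_ne_zero_iff.2 (hne x hx)) (prod_ne_zero_iff.2 (hne y hy)),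
    log_prod (hne x hx), log_prod (hne y hy), ← sum_sub_distrib, mul_sum]
  refine sum_le_sum fun i hi => ?_
  have hi := mem_range.1 hi
  exact log_deriv_sub_le_mul_length (hsmooth i hi) (hpos i hi) (hK i hi)
    (horbit i hi x hx) (horbit i hi y hy)

theorem statement14_general (N : ℕ) (hN : 1 ≤ N)
    (l r : ℕ → ℝ)
    (ψ : ℕ → ℝ → ℝ)
    (hsmooth : ∀ i < N, ContDiff ℝ 2 (ψ i))
    (hpos : ∀ i < N, ∀ x ∈ Icc (l i) (r i), 0 < deriv (ψ i) x)
    (hmaps : ∀ i < N, ψ i '' Icc (l i) (r i) = Icc (l (i + 1)) (r (i + 1)))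
    -- `F k = ψ_k ∘ ⋯ ∘ ψ₀`
    (F : ℕ → ℝ → ℝ)
    (hF0 : F 0 = ψ 0)
    (hFs : ∀ k : ℕ, F (k + 1) = ψ (k + 1) ∘ F k) :
    ∀ K : ℝ,
      (∀ i < N, ∀ x ∈ Icc (l i) (r i),
        |deriv (deriv (ψ i)) x / deriv (ψ i) x| ≤ K) →
      ∀ x ∈ Icc (l 0) (r 0), ∀ y ∈ Icc (l 0) (r 0),
        Real.log (deriv (F (N - 1)) x / deriv (F (N - 1)) y) ≤
          K * ∑ k ∈ Finset.range N, (r k - l k) := by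
  intro K hK x hx y hy
  rw [eq_compChain_succ ψ hF0 hFs, Nat.sub_add_cancel hN]
  exact log_deriv_compChain_div_le hsmooth hpos
    (fun i hi => hmaps i hi ▸ mapsTo_image _ _) hK hx hy

/-- Distortion Lemma, Denjoy–Schwartz.  Let
`J₀, …, J_N` (here `J_i = [l i, r i]`) be compact intervals and
`ψ_i : J_i → J_{i+1}` (`i = 0, …, N-1`) orientation-preserving `C²`
diffeomorphisms (`ψ_i' > 0`, `ψ_i(J_i) = J_{i+1}`).  Then the composition
`F_{N-1} = ψ_{N-1} ∘ ⋯ ∘ ψ₀` has distortion rate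
`κ(F_{N-1}) = max_{x,y∈J₀} ln (F_{N-1}'(x)/F_{N-1}'(y))` bounded by
`(max_i max_{x∈J_i} |ψ_i''(x)/ψ_i'(x)|) ⬝ Σ_{k=0}^{N-1} |J_k|`. -/
theorem statement14 (N : ℕ) (hN : 1 ≤ N)
    (l r : ℕ → ℝ) (hlr : ∀ i ≤ N, l i ≤ r i)
    (ψ : ℕ → ℝ → ℝ)
    (hsmooth : ∀ i < N, ContDiff ℝ 2 (ψ i))
    (hpos : ∀ i < N, ∀ x ∈ Icc (l i) (r i), 0 < deriv (ψ i) x)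
    (hmaps : ∀ i < N, ψ i '' Icc (l i) (r i) = Icc (l (i + 1)) (r (i + 1)))
    -- `F k = ψ_k ∘ ⋯ ∘ ψ₀`
    (F : ℕ → ℝ → ℝ)
    (hF0 : F 0 = ψ 0)
    (hFs : ∀ k : ℕ, F (k + 1) = ψ (k + 1) ∘ F k) :
    ∀ K : ℝ,
      (∀ i < N, ∀ x ∈ Icc (l i) (r i),
        |deriv (deriv (ψ i)) x / deriv (ψ i) x| ≤ K) →
      ∀ x ∈ Icc (l 0) (r 0), ∀ y ∈ Icc (l 0) (r 0),
        Real.log (deriv (F (N - 1)) x / deriv (F (N - 1)) y) ≤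
          K * ∑ k ∈ Finset.range N, (r k - l k) :=
  statement14_general N hN l r ψ hsmooth hpos hmaps F hF0 hFs
end

section
/- Fix ν ∈ (0, 1/2). For the system ẋ = 1, ẏ = ε·w(x,y,ε) with x taken modulo 1, where 0 < c_w < w(x,y,ε) < −C_w/(y + O(ε)) for a < y < 0, consider the vertical Poincaré map ψ : Σ → Σ of the cross-section Σ = {x = 0} and the intervals J_{k+1} = ψ(J_k) generated from J₀, with N chosen so that J_N = [x_N, x_{N+1}] intersects Γ_ε = {y = −ε^ν}. Then for all sufficiently small ε > 0: |J_N| ≤ ε^ν and x_{N+1} < −(1/2)ε^ν. -/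
set_option maxHeartbeats 1000000


noncomputable section

open Real Set Filter Topology

private lemma ev_lt_of_hasDerivAt_neg {g : ℝ → ℝ} {s g' : ℝ}
    (h : HasDerivAt g g' s) (hg' : g' < 0) : ∀ᶠ x in 𝓝[>] s, g x < g s := by
  have hs : Tendsto (slope g s) (𝓝[>] s) (𝓝 g') :=
    (hasDerivAt_iff_tendsto_slope.mp h).mono_left
      (nhdsWithin_mono s fun x hx => ne_of_gt hx)
  have hev : ∀ᶠ x in 𝓝[>] s, slope g s x < 0 := hs.eventually_lt_const hg'
  filter_upwards [hev, self_mem_nhdsWithin] with x hx hxs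
  have h1 : (0:ℝ) < x - s := sub_pos.mpr hxs
  rw [slope_def_field] at hx
  have := (div_lt_iff₀ h1).mp hx
  nlinarith

private lemma barrier {g : ℝ → ℝ} {t : ℝ} (hg : Continuous g) (ht0 : 0 ≤ t)
    (h0 : g 0 ≤ 0)
    (hstep : ∀ s, 0 ≤ s → s < t → g s = 0 → ∀ᶠ x in 𝓝[>] s, g x < 0) :
    g t ≤ 0 := by
  by_contra hgt
  push_neg at hgt
  set A : Set ℝ := Icc 0 t ∩ {x | g x ≤ 0} with hA
  have hAne : A.Nonempty := ⟨0, ⟨le_refl 0, ht0⟩, h0⟩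
  have hAbdd : BddAbove A := ⟨t, fun x hx => hx.1.2⟩
  have hAcomp : IsCompact A :=
    (isCompact_Icc).inter_right (isClosed_le hg continuous_const)
  set s := sSup A with hsdef
  have hsA : s ∈ A := hAcomp.sSup_mem hAne
  have hst : s < t := by
    rcases lt_or_eq_of_le hsA.1.2 with h | h
    · exact h
    · exfalso; have := hsA.2; rw [h] at this; exact absurd this (not_le.mpr hgt)
  have hgs : g s ≤ 0 := hsA.2
  have hev : ∀ᶠ x in 𝓝[>] s, g x < 0 := by
    rcases lt_or_eq_of_le hgs with h | h
    · have : ∀ᶠ x in 𝓝 s, g x < 0 :=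
        ((isOpen_lt hg continuous_const).eventually_mem h).mono fun y hy => hy
      exact this.filter_mono nhdsWithin_le_nhds
    · exact hstep s hsA.1.1 hst h
  have hIoo : ∀ᶠ x in 𝓝[>] s, x ∈ Ioo s t :=
    eventually_of_mem (Ioo_mem_nhdsGT_of_mem ⟨le_refl s, hst⟩) fun _ h => h
  obtain ⟨x, hxg, hxI⟩ := (hev.and hIoo).exists
  have hxA : x ∈ A := ⟨⟨hsA.1.1.trans hxI.1.le, hxI.2.le⟩, hxg.le⟩
  exact absurd (le_csSup hAbdd hxA) (not_le.mpr hxI.1)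


/-- The system `ẋ = 1`, `ẏ = ε w(x,y,ε)` (obtained from the slow-fast system
`ẋ = f`, `ẏ = ε` near the jump point by dividing by `f`, so `w = 1/f`), with
`x` taken modulo `1`, together with its flow: `ysol ε x₀ y₀ x` is the value
at `x` of the solution of `dy/dx = ε w(x,y,ε)` with `y(x₀) = y₀`. -/
structure WSys where
  w : ℝ → ℝ → ℝ → ℝ
  ysol : ℝ → ℝ → ℝ → ℝ → ℝ
  smooth : ContDiff ℝ (⊤ : ℕ∞) (fun p : ℝ × ℝ × ℝ => w p.1 p.2.1 p.2.2)
  per_x : ∀ x y ε, w (x + 1) y ε = w x y ε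
  ysol_init : ∀ ε x₀ y₀, ysol ε x₀ y₀ x₀ = y₀
  ysol_ode : ∀ ε x₀ y₀ x, 0 < ε →
    HasDerivAt (ysol ε x₀ y₀) (ε * w x (ysol ε x₀ y₀ x) ε) x
  ysol_smooth : ∀ ε x, 0 < ε →
    ContDiff ℝ (⊤ : ℕ∞) (fun p : ℝ × ℝ => ysol ε p.1 p.2 x)

/-- Proposition 5.8.  Fix `ν ∈ (0, 1/2)`.  For the system
`ẋ = 1`, `ẏ = ε w(x,y,ε)` with `0 < c_w < w < -C_w/(y + O(ε))` for
`a < y < 0`, let `ψ : Σ → Σ`, `ψ(y₀) = ysol ε 0 y₀ 1`, be the vertical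
Poincaré map of `Σ = {x = 0}`, and let the intervals
`J_k = [ψ^[k] p₀, ψ^[k+1] p₀]` be generated from `J₀`.  If `N` is such that
`J_N = [x_N, x_{N+1}]` intersects `Γ_ε = {y = -ε^ν}`, then for all
sufficiently small `ε > 0`: `|J_N| ≤ ε^ν` and `x_{N+1} < -(1/2) ε^ν`. -/
theorem statement15 (S : WSys)
    (a cw Cw K : ℝ) (ha : a < 0) (hcw : 0 < cw) (hCw : 0 < Cw) (hK : 0 < K)
    (hb : ∀ x y ε : ℝ, 0 < ε → a ≤ y → y + K * ε < 0 →
      cw < S.w x y ε ∧ S.w x y ε < -(Cw / (y + K * ε)))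
    (ν : ℝ) (hν : ν ∈ Ioo (0:ℝ) (1/2)) :
    ∃ ε₀ : ℝ, 0 < ε₀ ∧
      ∀ ε ∈ Ioc (0:ℝ) ε₀, ∀ p₀ : ℝ, a ≤ p₀ → p₀ < 0 → ∀ N : ℕ,
        (fun y₀ => S.ysol ε 0 y₀ 1)^[N] p₀ ≤ -(ε ^ ν) →
        -(ε ^ ν) ≤ (fun y₀ => S.ysol ε 0 y₀ 1)^[N + 1] p₀ →
        (fun y₀ => S.ysol ε 0 y₀ 1)^[N + 1] p₀
            - (fun y₀ => S.ysol ε 0 y₀ 1)^[N] p₀ ≤ ε ^ ν ∧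
        (fun y₀ => S.ysol ε 0 y₀ 1)^[N + 1] p₀ < -(1/2 * ε ^ ν) := by
  obtain ⟨hν0, hν2⟩ := hν
  -- the eventual smallness conditions on ε
  have trp : ∀ p : ℝ, 0 < p → Tendsto (fun ε : ℝ => ε ^ p) (𝓝[>] (0:ℝ)) (𝓝 0) := by
    intro p hp
    have h := (Real.continuousAt_rpow_const 0 p (Or.inr hp.le)).tendsto
    rw [Real.zero_rpow hp.ne'] at h
    exact h.mono_left nhdsWithin_le_nhds
  have hE : ∀ᶠ ε in 𝓝[>] (0:ℝ),
      a + K * ε < 0 ∧ 4 * K * ε ^ (1 - ν) < 1 ∧ 8 * Cw * ε ^ (1 - 2 * ν) < 1 := by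
    have t1 : Tendsto (fun ε : ℝ => a + K * ε) (𝓝[>] (0:ℝ)) (𝓝 a) := by
      have h : Tendsto (fun ε : ℝ => a + K * ε) (𝓝 0) (𝓝 (a + K * 0)) :=
        ((continuous_const.add (continuous_const.mul continuous_id)).tendsto 0)
      simpa using h.mono_left nhdsWithin_le_nhds
    have t2 : Tendsto (fun ε : ℝ => 4 * K * ε ^ (1 - ν)) (𝓝[>] (0:ℝ)) (𝓝 0) := by
      have h := (trp (1 - ν) (by linarith)).const_mul (4 * K)
      simpa using h
    have t3 : Tendsto (fun ε : ℝ => 8 * Cw * ε ^ (1 - 2 * ν)) (𝓝[>] (0:ℝ)) (𝓝 0) := by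
      have h := (trp (1 - 2 * ν) (by linarith)).const_mul (8 * Cw)
      simpa using h
    exact (t1.eventually_lt_const ha).and
      ((t2.eventually_lt_const one_pos).and (t3.eventually_lt_const one_pos))
  obtain ⟨ε₀, hε₀pos, hsub⟩ := mem_nhdsGT_iff_exists_Ioc_subset.mp hE
  refine ⟨ε₀, hε₀pos, ?_⟩
  intro ε hεI p₀ hp₀a hp₀0 N hxN hxN1
  obtain ⟨hc1, hc2, hc3⟩ := hsub hεI
  have hε : 0 < ε := hεI.1
  have hεν : 0 < ε ^ ν := Real.rpow_pos_of_pos hε ν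
  have hεν1 : 0 < ε ^ (1 - ν) := Real.rpow_pos_of_pos hε (1 - ν)
  have hεν2 : 0 < ε ^ (1 - 2 * ν) := Real.rpow_pos_of_pos hε (1 - 2 * ν)
  have h1 : ε = ε ^ ν * ε ^ (1 - ν) := by
    rw [← Real.rpow_add hε]; norm_num
  have h2 : ε ^ (1 - ν) = ε ^ ν * ε ^ (1 - 2 * ν) := by
    rw [← Real.rpow_add hε]; ring_nf
  have hB : K * ε < ε ^ ν / 4 := by
    nlinarith [mul_lt_mul_of_pos_right hc2 hεν]
  set M : ℝ := 4 * Cw * ε ^ (1 - ν) with hMdef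
  have hM0 : 0 ≤ M := by positivity
  have hMlt : M < ε ^ ν / 2 := by
    nlinarith [mul_lt_mul_of_pos_right hc3 hεν]
  have hMε : M * ε ^ ν = 4 * Cw * ε := by rw [hMdef]; nlinarith [h1]
  -- continuity of solutions
  have hcontz : ∀ y₀ : ℝ, Continuous (S.ysol ε 0 y₀) := by
    intro y₀
    have hdiff : Differentiable ℝ (S.ysol ε 0 y₀) :=
      fun x => (S.ysol_ode ε 0 y₀ x hε).differentiableAt
    exact hdiff.continuous
  -- solutions starting at or above a stay at or above a
  have stays : ∀ y₀ : ℝ, a ≤ y₀ → ∀ x : ℝ, 0 ≤ x → a ≤ S.ysol ε 0 y₀ x := by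
    intro y₀ hy₀ x hx
    have hbar : (fun u => a - S.ysol ε 0 y₀ u) x ≤ 0 := by
      apply barrier (continuous_const.sub (hcontz y₀)) hx
      · show a - S.ysol ε 0 y₀ 0 ≤ 0; rw [S.ysol_init]; linarith
      · intro s hs0 hst hgs
        have hgs' : a - S.ysol ε 0 y₀ s = 0 := hgs
        have hzs : S.ysol ε 0 y₀ s = a := by linarith
        have hw := (hb s a ε hε le_rfl hc1).1
        have hd : HasDerivAt (fun u => a - S.ysol ε 0 y₀ u)
            (0 - ε * S.w s (S.ysol ε 0 y₀ s) ε) s :=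
          (hasDerivAt_const s a).sub (S.ysol_ode ε 0 y₀ s hε)
        rw [hzs] at hd
        have hneg : 0 - ε * S.w s a ε < 0 := by nlinarith
        have hev := ev_lt_of_hasDerivAt_neg hd hneg
        simpa [hgs'] using hev
    simpa using hbar
  -- all iterates stay at or above a
  have hiter : ∀ k : ℕ, a ≤ (fun y₀ => S.ysol ε 0 y₀ 1)^[k] p₀ := by
    intro k
    induction k with
    | zero => simpa using hp₀a
    | succ k ih =>
      rw [Function.iterate_succ_apply']
      exact stays _ ih 1 zero_le_one
  set yN : ℝ := (fun y₀ => S.ysol ε 0 y₀ 1)^[N] p₀ with hyNdef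
  have haN : a ≤ yN := hiter N
  have hN : yN ≤ -(ε ^ ν) := hxN
  have hNsucc : (fun y₀ => S.ysol ε 0 y₀ 1)^[N + 1] p₀ = S.ysol ε 0 yN 1 := by
    rw [Function.iterate_succ_apply']
  -- the key upper bound on the solution from yN
  have hup : ∀ x : ℝ, 0 ≤ x → x ≤ 1 → S.ysol ε 0 yN x ≤ yN + M * x := by
    intro x hx0 hx1
    have hbar : (fun u => S.ysol ε 0 yN u - (yN + M * u)) x ≤ 0 := by
      apply barrier
        ((hcontz yN).sub (continuous_const.add (continuous_const.mul continuous_id))) hx0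
      · simp [S.ysol_init]; exact le_rfl
      · intro s hs0 hst hgs
        have hgs' : S.ysol ε 0 yN s - (yN + M * s) = 0 := hgs
        set zs := S.ysol ε 0 yN s with hzsdef
        have hsz : zs = yN + M * s := by linarith
        have hsa : a ≤ zs := stays yN haN s hs0
        have hs1 : s ≤ 1 := le_of_lt (lt_of_lt_of_le hst hx1)
        have hMs : M * s ≤ M * 1 := mul_le_mul_of_nonneg_left hs1 hM0
        rw [mul_one] at hMs
        have hzineq : zs ≤ -(ε ^ ν) + M := by linarith
        have hzK : zs + K * ε ≤ -(ε ^ ν / 4) := by linarith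
        have hzK0 : zs + K * ε < 0 := by linarith [hεν]
        have hw := (hb s zs ε hε hsa hzK0).2
        have hewM : ε * S.w s zs ε < M := by
          have hpos : 0 < -(zs + K * ε) := by linarith
          have hne : zs + K * ε ≠ 0 := ne_of_lt hzK0
          have hkey : -(Cw / (zs + K * ε)) * (-(zs + K * ε)) = Cw := by
            field_simp
          have h3 : S.w s zs ε * (-(zs + K * ε)) < Cw := by
            have := mul_lt_mul_of_pos_right hw hpos
            rw [hkey] at this; exact this
          have hWpos : 0 < S.w s zs ε := lt_trans hcw (hb s zs ε hε hsa hzK0).1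
          have hP : ε ^ ν / 4 ≤ -(zs + K * ε) := by linarith
          have h4 : S.w s zs ε * (ε ^ ν / 4) ≤ S.w s zs ε * (-(zs + K * ε)) :=
            mul_le_mul_of_nonneg_left hP hWpos.le
          have h5 : S.w s zs ε * ε ^ ν < 4 * Cw := by linarith
          have h6 : (ε * S.w s zs ε) * ε ^ ν < M * ε ^ ν := by
            rw [hMε]; nlinarith [mul_lt_mul_of_pos_left h5 hε]
          exact lt_of_mul_lt_mul_right h6 hεν.le
        have hd : HasDerivAt (fun u => S.ysol ε 0 yN u - (yN + M * u))
            (ε * S.w s zs ε - M) s := by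
          have h6 : HasDerivAt (fun u : ℝ => yN + M * u) M s := by
            simpa using ((hasDerivAt_id s).const_mul M).const_add yN
          exact (S.ysol_ode ε 0 yN s hε).sub h6
        have hneg : ε * S.w s zs ε - M < 0 := by linarith
        have hev := ev_lt_of_hasDerivAt_neg hd hneg
        exact hev.mono fun x hx => by
          have hx' : S.ysol ε 0 yN x - (yN + M * x) < S.ysol ε 0 yN s - (yN + M * s) := hx
          show S.ysol ε 0 yN x - (yN + M * x) < 0
          linarith [hzsdef]
    simpa using hbar
  have hz1 := hup 1 zero_le_one le_rfl
  rw [hNsucc]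
  constructor
  · linarith
  · linarith
end
end

section
/- Fix ν ∈ (0, 1/2). For the system ẋ = 1, ẏ = ε·w(x,y,ε) with x modulo 1, and ψ : Σ → Σ the vertical Poincaré map of Σ = {x = 0} given by ψ(y₀) = y(1; y₀), the following estimates hold in the domain a < y < −ε^ν for all sufficiently small ε > 0: ψ'(y₀) ≥ 1/2 and ψ''(y₀) ≤ C·ε^{1−4ν} for some constant C > 0 independent of ε. -/
noncomputable section

open Real Set Filter Topology

/-- ∂w/∂y. -/
def WSys.wy (S : WSys) (x y ε : ℝ) : ℝ := deriv (fun t => S.w x t ε) y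

/-- ∂²w/∂y². -/
def WSys.wyy (S : WSys) (x y ε : ℝ) : ℝ := deriv (fun t => S.wy x t ε) y

open scoped ContDiff

/-- Forward Grönwall wrapper. -/
lemma gron_abs {f f' : ℝ → ℝ} {L E c : ℝ}
    (hf : ∀ t, HasDerivAt f (f' t) t)
    (hb : ∀ t ∈ Icc (0:ℝ) c, |f' t| ≤ L * |f t| + E) :
    ∀ t ∈ Icc (0:ℝ) c, |f t| ≤ gronwallBound |f 0| L E t := by
  intro t ht
  have h := norm_le_gronwallBound_of_norm_deriv_right_le
    (f := f) (f' := f') (a := 0) (b := c) (δ := |f 0|) (K := L) (ε := E)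
    (fun x _ => (hf x).continuousAt.continuousWithinAt)
    (fun x _ => (hf x).hasDerivWithinAt)
    (by simp [Real.norm_eq_abs])
    (fun x hx => by
      simpa [Real.norm_eq_abs] using hb x (Ico_subset_Icc_self hx))
    t ht
  simpa [Real.norm_eq_abs] using h

/-- Reverse Grönwall wrapper. -/
lemma gron_rev {f f' : ℝ → ℝ} {L c : ℝ} (hc : 0 ≤ c)
    (hf : ∀ t, HasDerivAt f (f' t) t)
    (hb : ∀ t ∈ Icc (0:ℝ) c, |f' t| ≤ L * |f t|) :
    |f 0| ≤ |f c| * Real.exp (L * c) := by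
  have hg : ∀ t, HasDerivAt (fun x => f (c - x)) (f' (c - t) * (-1)) t := fun t =>
    HasDerivAt.comp t (hf (c - t)) ((hasDerivAt_id t).const_sub c)
  have h2 := gron_abs (f := fun x => f (c - x)) (f' := fun t => f' (c - t) * (-1))
    (L := L) (E := 0) (c := c) hg
    (fun t ht => by
      have hmem : c - t ∈ Icc (0:ℝ) c := ⟨by linarith [ht.2], by linarith [ht.1]⟩
      have := hb (c - t) hmem
      simpa [abs_mul] using this)
    c ⟨hc, le_rfl⟩
  simpa [sub_self, sub_zero, gronwallBound_ε0] using h2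

set_option maxHeartbeats 4000000 in
/-- Proposition 5.10.  Fix `ν ∈ (0, 1/2)`.  For the system
`ẋ = 1`, `ẏ = ε w(x,y,ε)` (with the jump-point bounds on `w`, `∂w/∂y`,
`∂²w/∂y²`), the vertical Poincaré map `ψ(y₀) = ysol ε 0 y₀ 1` of the
cross-section `Σ = {x = 0}` satisfies, in the domain `a < y₀ < -ε^ν` and for
all sufficiently small `ε > 0`: `ψ'(y₀) ≥ 1/2` and
`ψ''(y₀) ≤ C ε^{1-4ν}` with `C` independent of `ε`. -/
theorem statement16 (S : WSys)
    (a cw Cw C₁ C₂ K : ℝ) (ha : a < 0) (hcw : 0 < cw) (hCw : 0 < Cw)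
    (hC₁ : 0 < C₁) (hC₂ : 0 < C₂) (hK : 0 < K)
    (hb : ∀ x y ε : ℝ, 0 < ε → a - 1 ≤ y → y + K * ε < 0 →
      cw < S.w x y ε ∧ S.w x y ε < -(Cw / (y + K * ε)))
    (hby : ∀ x y ε : ℝ, 0 < ε → a - 1 ≤ y → y + K * ε < 0 →
      |S.wy x y ε| ≤ C₁ / (y + K * ε) ^ 2)
    (hbyy : ∀ x y ε : ℝ, 0 < ε → a - 1 ≤ y → y + K * ε < 0 →
      |S.wyy x y ε| ≤ C₂ / (y + K * ε) ^ 4)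
    (ν : ℝ) (hν : ν ∈ Ioo (0:ℝ) (1/2))
    -- a trajectory starting in `{a ≤ y ≤ -ε^ν}` stays in
    -- `{a - O(ε) ≤ y ≤ -ε^ν/2}` until it returns to `Σ`:
    (hconf : ∀ ε : ℝ, 0 < ε → ∀ y₀ ∈ Icc a (-(ε ^ ν)), ∀ x ∈ Icc (0:ℝ) 1,
      a - K * ε ≤ S.ysol ε 0 y₀ x ∧ S.ysol ε 0 y₀ x ≤ -(ε ^ ν) / 2) :
    ∃ C : ℝ, 0 < C ∧ ∃ ε₀ : ℝ, 0 < ε₀ ∧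
      ∀ ε ∈ Ioc (0:ℝ) ε₀, ∀ y₀ : ℝ, a < y₀ → y₀ < -(ε ^ ν) →
        (1/2 : ℝ) ≤ deriv (fun t => S.ysol ε 0 t 1) y₀ ∧
        deriv (deriv (fun t => S.ysol ε 0 t 1)) y₀ ≤ C * ε ^ (1 - 4 * ν) := by
  obtain ⟨hν0, hν2⟩ := hν
  set D : ℝ := max (4*K) (64*C₁) with hDdef
  have hD0 : 0 < D := lt_max_of_lt_left (by positivity)
  have hpν : 0 < 1 - 2*ν := by linarith
  refine ⟨2048*C₂, by positivity, min 1 (D⁻¹ ^ (1-2*ν)⁻¹),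
    lt_min one_pos (Real.rpow_pos_of_pos (by positivity) _), ?_⟩
  rintro ε ⟨hε0, hεle⟩ y₀ hy₀a hy₀ν
  have hε1 : ε ≤ 1 := hεle.trans (min_le_left _ _)
  have hεD : D * ε ^ (1-2*ν) ≤ 1 := by
    have h1 : ε ^ (1-2*ν) ≤ (D⁻¹ ^ (1-2*ν)⁻¹) ^ (1-2*ν) :=
      Real.rpow_le_rpow hε0.le (hεle.trans (min_le_right _ _)) hpν.le
    rw [← Real.rpow_mul (by positivity), inv_mul_cancel₀ (ne_of_gt hpν), Real.rpow_one] at h1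
    calc D * ε ^ (1-2*ν) ≤ D * D⁻¹ := mul_le_mul_of_nonneg_left h1 hD0.le
      _ = 1 := mul_inv_cancel₀ hD0.ne'
  have hεν0 : (0:ℝ) < ε ^ ν := Real.rpow_pos_of_pos hε0 _
  have hm1 : ε ≤ ε ^ (1-2*ν) := by
    have := Real.rpow_le_rpow_of_exponent_ge hε0 hε1 (show 1-2*ν ≤ 1 by linarith)
    rwa [Real.rpow_one] at this
  have hm2 : ε ^ (1-ν) ≤ ε ^ (1-2*ν) :=
    Real.rpow_le_rpow_of_exponent_ge hε0 hε1 (by linarith)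
  have hKε1 : K * ε ≤ 1 := by
    have h4K : 4*K ≤ D := le_max_left _ _
    calc K*ε ≤ D*ε := mul_le_mul_of_nonneg_right (by linarith) hε0.le
      _ ≤ D*ε^(1-2*ν) := mul_le_mul_of_nonneg_left hm1 hD0.le
      _ ≤ 1 := hεD
  have hKεν : K * ε ≤ ε ^ ν / 4 := by
    have hsplit : ε ^ (1-ν) * ε ^ ν = ε := by
      rw [← Real.rpow_add hε0]; norm_num
    have hmν0 : (0:ℝ) < ε ^ (1-ν) := Real.rpow_pos_of_pos hε0 _
    have h1 : 4*K*ε^(1-ν) ≤ 1 := by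
      have h4K : 4*K ≤ D := le_max_left _ _
      calc 4*K*ε^(1-ν) ≤ D*ε^(1-2*ν) :=
          mul_le_mul h4K hm2 hmν0.le hD0.le
        _ ≤ 1 := hεD
    have h2 : 4*K*ε^(1-ν) * ε^ν / 4 = K * ε := by rw [mul_assoc, hsplit]; ring
    calc K*ε = 4*K*ε^(1-ν) * ε^ν / 4 := h2.symm
      _ ≤ 1 * ε^ν / 4 := by gcongr
      _ = ε^ν/4 := by ring
  set M₁ : ℝ := 16*C₁/(ε^ν)^2 with hM₁def
  set M₂ : ℝ := 256*C₂/(ε^ν)^4 with hM₂def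
  set L : ℝ := ε*M₁ with hLdef
  clear_value M₁ M₂ L
  have hM₁0 : 0 < M₁ := by rw [hM₁def]; positivity
  have hM₂0 : 0 < M₂ := by rw [hM₂def]; positivity
  have hL0 : 0 < L := by rw [hLdef, hM₁def]; positivity
  have hεpow2 : (ε^ν)^(2:ℕ) = ε^(2*ν) := by
    rw [← Real.rpow_natCast (ε^ν) 2, ← Real.rpow_mul hε0.le]
    norm_num [mul_comm]
  have hεpow4 : (ε^ν)^(4:ℕ) = ε^(4*ν) := by
    rw [← Real.rpow_natCast (ε^ν) 4, ← Real.rpow_mul hε0.le]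
    norm_num [mul_comm]
  have hL14 : L ≤ 1/4 := by
    have hL' : L = 16*C₁*ε^(1-2*ν) := by
      rw [hLdef, hM₁def, hεpow2, Real.rpow_sub hε0, Real.rpow_one]; ring
    have h64 : 64*C₁ ≤ D := le_max_right _ _
    have hp := Real.rpow_pos_of_pos hε0 (1-2*ν)
    nlinarith [mul_nonneg (show (0:ℝ) ≤ D - 64*C₁ by linarith) hp.le]
  have hlog : (0.6931471803:ℝ) < Real.log 2 := Real.log_two_gt_d9
  have hexpL : Real.exp L ≤ 2 := by
    have h1 : Real.exp L ≤ Real.exp (Real.log 2) := Real.exp_le_exp.mpr (by linarith)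
    rwa [Real.exp_log two_pos] at h1
  have hexp2L : Real.exp (L+L) ≤ 2 := by
    have h1 : Real.exp (L+L) ≤ Real.exp (Real.log 2) := Real.exp_le_exp.mpr (by linarith)
    rwa [Real.exp_log two_pos] at h1
  -- the region J
  set J : Set ℝ := Icc (a - K*ε) (-(ε^ν)/2) with hJdef
  have hJfacts : ∀ t ∈ J, a - 1 ≤ t ∧ t + K*ε ≤ -(ε^ν)/4 := by
    rintro t ⟨ht1, ht2⟩
    constructor
    · linarith
    · linarith
  have hJneg : ∀ t ∈ J, t + K*ε < 0 := fun t ht =>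
    lt_of_le_of_lt (hJfacts t ht).2 (by linarith)
  -- smoothness in y
  have hWsm : ∀ x : ℝ, ContDiff ℝ ∞ (fun t => S.w x t ε) := by
    intro x
    have h0 : (fun t : ℝ => S.w x t ε)
        = (fun p : ℝ × ℝ × ℝ => S.w p.1 p.2.1 p.2.2) ∘ (fun t => (x, t, ε)) := rfl
    rw [h0]
    exact (S.smooth.of_le (by simp)).comp (contDiff_const.prodMk (contDiff_id.prodMk contDiff_const))
  have hle1 : (∞ : WithTop ℕ∞) ≠ 0 := by simp
  have hWyd : ∀ x t : ℝ, HasDerivAt (fun s => S.w x s ε) (S.wy x t ε) t := fun x t =>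
    (((hWsm x).differentiable hle1) t).hasDerivAt
  have hWySm : ∀ x : ℝ, ContDiff ℝ ∞ (fun t => S.wy x t ε) := fun x =>
    (contDiff_infty_iff_deriv.mp (hWsm x)).2
  have hWyyd : ∀ x t : ℝ, HasDerivAt (fun s => S.wy x s ε) (S.wyy x t ε) t := fun x t =>
    (((hWySm x).differentiable hle1) t).hasDerivAt
  -- bounds on J
  have hwyJ : ∀ (x : ℝ), ∀ t ∈ J, |S.wy x t ε| ≤ M₁ := by
    intro x t ht
    obtain ⟨h1, h2⟩ := hJfacts t ht
    have h3 : t + K*ε < 0 := hJneg t ht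
    have hb1 := hby x t ε hε0 h1 h3
    have habs : ε^ν/4 ≤ |t+K*ε| := by rw [abs_of_neg h3]; linarith
    have hsq : (ε^ν/4)^2 ≤ (t+K*ε)^2 := by
      calc (ε^ν/4)^2 ≤ |t+K*ε|^2 := pow_le_pow_left₀ (by positivity) habs 2
        _ = (t+K*ε)^2 := sq_abs _
    have h4 : C₁/(t+K*ε)^2 ≤ M₁ := by
      rw [hM₁def, div_le_div_iff₀ ((by positivity : (0:ℝ) < (ε^ν/4)^2).trans_le hsq)
        (by positivity)]
      linarith [mul_le_mul_of_nonneg_left hsq (by positivity : (0:ℝ) ≤ 16*C₁)]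
    exact hb1.trans h4
  have hwyyJ : ∀ (x : ℝ), ∀ t ∈ J, |S.wyy x t ε| ≤ M₂ := by
    intro x t ht
    obtain ⟨h1, h2⟩ := hJfacts t ht
    have h3 : t + K*ε < 0 := hJneg t ht
    have hb1 := hbyy x t ε hε0 h1 h3
    have habs : ε^ν/4 ≤ |t+K*ε| := by rw [abs_of_neg h3]; linarith
    have hsq : (ε^ν/4)^4 ≤ (t+K*ε)^4 := by
      calc (ε^ν/4)^4 ≤ |t+K*ε|^4 := pow_le_pow_left₀ (by positivity) habs 4
        _ = (t+K*ε)^4 := by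
            rw [pow_abs, abs_of_nonneg (by positivity : (0:ℝ) ≤ (t+K*ε)^4)]
    have h4 : C₂/(t+K*ε)^4 ≤ M₂ := by
      rw [hM₂def, div_le_div_iff₀ ((by positivity : (0:ℝ) < (ε^ν/4)^4).trans_le hsq)
        (by positivity)]
      linarith [mul_le_mul_of_nonneg_left hsq (by positivity : (0:ℝ) ≤ 256*C₂)]
    exact hb1.trans h4
  -- Lipschitz and Taylor bounds on J
  have hconvJ : Convex ℝ J := convex_Icc _ _
  have hlip : ∀ (x : ℝ), ∀ u ∈ J, ∀ v ∈ J, |S.w x u ε - S.w x v ε| ≤ M₁ * |u - v| := by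
    intro x u hu v hv
    have h := Convex.norm_image_sub_le_of_norm_hasDerivWithin_le
      (f := fun s => S.w x s ε) (f' := fun s => S.wy x s ε) (s := J)
      (fun s hs => (hWyd x s).hasDerivWithinAt)
      (fun s hs => by simpa [Real.norm_eq_abs] using hwyJ x s hs) hconvJ hv hu
    simpa [Real.norm_eq_abs] using h
  have hlipy : ∀ (x : ℝ), ∀ u ∈ J, ∀ v ∈ J, |S.wy x u ε - S.wy x v ε| ≤ M₂ * |u - v| := by
    intro x u hu v hv
    have h := Convex.norm_image_sub_le_of_norm_hasDerivWithin_le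
      (f := fun s => S.wy x s ε) (f' := fun s => S.wyy x s ε) (s := J)
      (fun s hs => (hWyyd x s).hasDerivWithinAt)
      (fun s hs => by simpa [Real.norm_eq_abs] using hwyyJ x s hs) hconvJ hv hu
    simpa [Real.norm_eq_abs] using h
  have htay : ∀ (x : ℝ), ∀ u ∈ J, ∀ v ∈ J,
      |S.w x u ε - S.w x v ε - S.wy x v ε * (u - v)| ≤ M₂ * (u-v)^2 := by
    intro x u hu v hv
    have hIJ : Icc (min u v) (max u v) ⊆ J := by
      rw [hJdef]
      exact Icc_subset_Icc (le_min hu.1 hv.1) (max_le hu.2 hv.2)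
    have hder : ∀ t ∈ Icc (min u v) (max u v),
        HasDerivWithinAt (fun s => S.w x s ε - S.wy x v ε * s)
          (S.wy x t ε - S.wy x v ε) (Icc (min u v) (max u v)) t := fun t _ =>
      (((hWyd x t).sub ((hasDerivAt_id t).const_mul (S.wy x v ε))).hasDerivWithinAt).congr_deriv
        (by ring)
    have hbnd : ∀ t ∈ Icc (min u v) (max u v),
        ‖S.wy x t ε - S.wy x v ε‖ ≤ M₂ * |u - v| := by
      intro t ht
      have h1 := hlipy x t (hIJ ht) v hv
      have h2 : |t - v| ≤ |u - v| := by
        rcases le_total u v with hc | hc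
        · rw [min_eq_left hc, max_eq_right hc] at ht
          rw [abs_of_nonpos (by linarith [ht.2]), abs_of_nonpos (by linarith : u - v ≤ 0)]
          linarith [ht.1]
        · rw [min_eq_right hc, max_eq_left hc] at ht
          rw [abs_of_nonneg (by linarith [ht.1]), abs_of_nonneg (by linarith : (0:ℝ) ≤ u - v)]
          linarith [ht.2]
      rw [Real.norm_eq_abs]
      exact h1.trans (mul_le_mul_of_nonneg_left h2 hM₂0.le)
    have hu' : u ∈ Icc (min u v) (max u v) := ⟨min_le_left _ _, le_max_left _ _⟩
    have hv' : v ∈ Icc (min u v) (max u v) := ⟨min_le_right _ _, le_max_right _ _⟩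
    have key := Convex.norm_image_sub_le_of_norm_hasDerivWithin_le hder hbnd
      (convex_Icc _ _) hv' hu'
    have heq : (S.w x u ε - S.wy x v ε * u) - (S.w x v ε - S.wy x v ε * v)
        = S.w x u ε - S.w x v ε - S.wy x v ε * (u - v) := by ring
    rw [Real.norm_eq_abs, Real.norm_eq_abs, heq] at key
    calc |S.w x u ε - S.w x v ε - S.wy x v ε * (u - v)| ≤ M₂ * |u-v| * |u-v| := key
      _ = M₂ * (u-v)^2 := by rw [mul_assoc, abs_mul_abs_self]; ring
  -- trajectories stay in J
  have hmem : ∀ y ∈ Icc a (-(ε^ν)), ∀ x ∈ Icc (0:ℝ) 1, S.ysol ε 0 y x ∈ J := by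
    intro y hy x hx
    rw [hJdef]
    exact ⟨(hconf ε hε0 y hy x hx).1, (hconf ε hε0 y hy x hx).2⟩
  -- key1 : Gronwall estimates for differences of trajectories
  have key1 : ∀ y₁ ∈ Icc a (-(ε^ν)), ∀ y₂ ∈ Icc a (-(ε^ν)), ∀ x ∈ Icc (0:ℝ) 1,
      |S.ysol ε 0 y₁ x - S.ysol ε 0 y₂ x| ≤ |y₁ - y₂| * Real.exp (L*x) ∧
      |y₁ - y₂| ≤ |S.ysol ε 0 y₁ x - S.ysol ε 0 y₂ x| * Real.exp (L*x) := by
    intro y₁ hy₁ y₂ hy₂ x hx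
    set p : ℝ → ℝ := fun t => S.ysol ε 0 y₁ t - S.ysol ε 0 y₂ t with hpdef
    have hder : ∀ t, HasDerivAt p
        (ε * S.w t (S.ysol ε 0 y₁ t) ε - ε * S.w t (S.ysol ε 0 y₂ t) ε) t := fun t =>
      (S.ysol_ode ε 0 y₁ t hε0).sub (S.ysol_ode ε 0 y₂ t hε0)
    have hbd : ∀ t ∈ Icc (0:ℝ) x,
        |ε * S.w t (S.ysol ε 0 y₁ t) ε - ε * S.w t (S.ysol ε 0 y₂ t) ε| ≤ L * |p t| := by
      intro t ht
      have htx : t ∈ Icc (0:ℝ) 1 := ⟨ht.1, ht.2.trans hx.2⟩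
      have h1 := hlip t (S.ysol ε 0 y₁ t) (hmem y₁ hy₁ t htx)
        (S.ysol ε 0 y₂ t) (hmem y₂ hy₂ t htx)
      calc |ε * S.w t (S.ysol ε 0 y₁ t) ε - ε * S.w t (S.ysol ε 0 y₂ t) ε|
          = ε * |S.w t (S.ysol ε 0 y₁ t) ε - S.w t (S.ysol ε 0 y₂ t) ε| := by
            rw [← mul_sub, abs_mul, abs_of_pos hε0]
        _ ≤ ε * (M₁ * |p t|) := mul_le_mul_of_nonneg_left h1 hε0.le
        _ = L*|p t| := by rw [hLdef]; ring
    have hp0 : p 0 = y₁ - y₂ := by simp [hpdef, S.ysol_init]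
    constructor
    · have h := gron_abs hder (E := 0) (fun t ht => by simpa using hbd t ht) x ⟨hx.1, le_rfl⟩
      rwa [hp0, gronwallBound_ε0] at h
    · have h := gron_rev hx.1 hder hbd
      rwa [hp0] at h
  -- key2 : Gronwall estimate for the second difference
  have key2 : ∀ h : ℝ, 0 ≤ h → a ≤ y₀ - h → y₀ + h ≤ -(ε^ν) →
      |S.ysol ε 0 (y₀+h) 1 - 2*S.ysol ε 0 y₀ 1 + S.ysol ε 0 (y₀-h) 1|
        ≤ 8*(ε*M₂)*h^2 := by
    intro h hh0 hha hhb
    have hy₀m : y₀ ∈ Icc a (-(ε^ν)) := ⟨hy₀a.le, hy₀ν.le⟩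
    have hyp : y₀+h ∈ Icc a (-(ε^ν)) := ⟨by linarith, hhb⟩
    have hym : y₀-h ∈ Icc a (-(ε^ν)) := ⟨hha, by linarith⟩
    set q : ℝ → ℝ := fun t =>
      S.ysol ε 0 (y₀+h) t - 2*S.ysol ε 0 y₀ t + S.ysol ε 0 (y₀-h) t with hqdef
    have hder : ∀ t, HasDerivAt q
        (ε*S.w t (S.ysol ε 0 (y₀+h) t) ε - 2*(ε*S.w t (S.ysol ε 0 y₀ t) ε)
          + ε*S.w t (S.ysol ε 0 (y₀-h) t) ε) t := fun t =>
      ((S.ysol_ode ε 0 (y₀+h) t hε0).sub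
        ((S.ysol_ode ε 0 y₀ t hε0).const_mul 2)).add (S.ysol_ode ε 0 (y₀-h) t hε0)
    have hsq : ∀ t ∈ Icc (0:ℝ) 1,
        (S.ysol ε 0 (y₀+h) t - S.ysol ε 0 y₀ t)^2 ≤ 2*h^2 ∧
        (S.ysol ε 0 (y₀-h) t - S.ysol ε 0 y₀ t)^2 ≤ 2*h^2 := by
      intro t ht
      have h1 := (key1 (y₀+h) hyp y₀ hy₀m t ht).1
      have h2 := (key1 (y₀-h) hym y₀ hy₀m t ht).1
      have habs1 : |y₀+h - y₀| = h := by
        rw [add_sub_cancel_left]; exact abs_of_nonneg hh0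
      have habs2 : |y₀-h - y₀| = h := by
        rw [sub_sub_cancel_left]
        rw [abs_neg]; exact abs_of_nonneg hh0
      have hex : Real.exp (L*t) ≤ Real.exp L :=
        Real.exp_le_exp.mpr (mul_le_of_le_one_right hL0.le ht.2)
      have hexp2 : Real.exp L * Real.exp L ≤ 2 := by rw [← Real.exp_add]; exact hexp2L
      have hexpLpos := (Real.exp_pos L).le
      rw [habs1] at h1
      rw [habs2] at h2
      have hb1 : |S.ysol ε 0 (y₀+h) t - S.ysol ε 0 y₀ t| ≤ h * Real.exp L :=
        h1.trans (mul_le_mul_of_nonneg_left hex hh0)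
      have hb2 : |S.ysol ε 0 (y₀-h) t - S.ysol ε 0 y₀ t| ≤ h * Real.exp L :=
        h2.trans (mul_le_mul_of_nonneg_left hex hh0)
      constructor
      · calc (S.ysol ε 0 (y₀+h) t - S.ysol ε 0 y₀ t)^2
            = |S.ysol ε 0 (y₀+h) t - S.ysol ε 0 y₀ t|^2 := (sq_abs _).symm
          _ ≤ (h*Real.exp L)^2 := pow_le_pow_left₀ (abs_nonneg _) hb1 2
          _ = h^2*(Real.exp L*Real.exp L) := by ring
          _ ≤ h^2*2 := mul_le_mul_of_nonneg_left hexp2 (sq_nonneg h)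
          _ = 2*h^2 := by ring
      · calc (S.ysol ε 0 (y₀-h) t - S.ysol ε 0 y₀ t)^2
            = |S.ysol ε 0 (y₀-h) t - S.ysol ε 0 y₀ t|^2 := (sq_abs _).symm
          _ ≤ (h*Real.exp L)^2 := pow_le_pow_left₀ (abs_nonneg _) hb2 2
          _ = h^2*(Real.exp L*Real.exp L) := by ring
          _ ≤ h^2*2 := mul_le_mul_of_nonneg_left hexp2 (sq_nonneg h)
          _ = 2*h^2 := by ring
    have hbd : ∀ t ∈ Icc (0:ℝ) 1,
        |ε*S.w t (S.ysol ε 0 (y₀+h) t) ε - 2*(ε*S.w t (S.ysol ε 0 y₀ t) ε)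
          + ε*S.w t (S.ysol ε 0 (y₀-h) t) ε| ≤ L*|q t| + 4*(ε*M₂)*h^2 := by
      intro t ht
      have hu : S.ysol ε 0 (y₀+h) t ∈ J := hmem _ hyp t ht
      have hv : S.ysol ε 0 y₀ t ∈ J := hmem _ hy₀m t ht
      have hz : S.ysol ε 0 (y₀-h) t ∈ J := hmem _ hym t ht
      set u := S.ysol ε 0 (y₀+h) t
      set v := S.ysol ε 0 y₀ t
      set z := S.ysol ε 0 (y₀-h) t
      have hA := htay t u hu v hv
      have hB := htay t z hz v hv
      have hwy := hwyJ t v hv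
      have hsq' := hsq t ht
      have hqt : q t = (u - v) + (z - v) := by rw [hqdef]; ring
      have hsplit : ε*S.w t u ε - 2*(ε*S.w t v ε) + ε*S.w t z ε
          = ε*((S.w t u ε - S.w t v ε - S.wy t v ε*(u-v))
            + (S.w t z ε - S.w t v ε - S.wy t v ε*(z-v)) + S.wy t v ε*((u-v)+(z-v))) := by
        ring
      rw [hsplit, ← hqt]
      have habs : |(S.w t u ε - S.w t v ε - S.wy t v ε*(u-v))
            + (S.w t z ε - S.w t v ε - S.wy t v ε*(z-v)) + S.wy t v ε*(q t)|
          ≤ M₂*(u-v)^2 + M₂*(z-v)^2 + M₁*|q t| := by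
        have t1 := abs_add_le ((S.w t u ε - S.w t v ε - S.wy t v ε*(u-v))
            + (S.w t z ε - S.w t v ε - S.wy t v ε*(z-v))) (S.wy t v ε*(q t))
        have t2 := abs_add_le (S.w t u ε - S.w t v ε - S.wy t v ε*(u-v))
            (S.w t z ε - S.w t v ε - S.wy t v ε*(z-v))
        have t3 : |S.wy t v ε*(q t)| ≤ M₁*|q t| := by
          rw [abs_mul]
          exact mul_le_mul_of_nonneg_right hwy (abs_nonneg _)
        linarith [hA, hB]
      calc |ε*((S.w t u ε - S.w t v ε - S.wy t v ε*(u-v))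
            + (S.w t z ε - S.w t v ε - S.wy t v ε*(z-v)) + S.wy t v ε*(q t))|
          = ε * |(S.w t u ε - S.w t v ε - S.wy t v ε*(u-v))
            + (S.w t z ε - S.w t v ε - S.wy t v ε*(z-v)) + S.wy t v ε*(q t)| := by
            rw [abs_mul, abs_of_pos hε0]
        _ ≤ ε * (M₂*(u-v)^2 + M₂*(z-v)^2 + M₁*|q t|) :=
            mul_le_mul_of_nonneg_left habs hε0.le
        _ ≤ ε * (M₂*(2*h^2) + M₂*(2*h^2) + M₁*|q t|) := by
            have := hsq'.1; have := hsq'.2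
            have hx1 : M₂*(u-v)^2 ≤ M₂*(2*h^2) := mul_le_mul_of_nonneg_left hsq'.1 hM₂0.le
            have hx2 : M₂*(z-v)^2 ≤ M₂*(2*h^2) := mul_le_mul_of_nonneg_left hsq'.2 hM₂0.le
            have : M₂*(u-v)^2 + M₂*(z-v)^2 + M₁*|q t|
                ≤ M₂*(2*h^2) + M₂*(2*h^2) + M₁*|q t| := by linarith
            exact mul_le_mul_of_nonneg_left this hε0.le
        _ = L*|q t| + 4*(ε*M₂)*h^2 := by rw [hLdef]; ring
    have hq0 : q 0 = 0 := by
      rw [hqdef]; simp [S.ysol_init]; ring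
    have hgron := gron_abs hder hbd 1 ⟨zero_le_one, le_rfl⟩
    rw [hq0, abs_zero] at hgron
    have hE0 : (0:ℝ) ≤ 4*(ε*M₂)*h^2 := by positivity
    have hgb : gronwallBound 0 L (4*(ε*M₂)*h^2) 1 ≤ 8*(ε*M₂)*h^2 := by
      rw [gronwallBound_of_K_ne_0 hL0.ne']
      simp only [zero_mul, zero_add, mul_one]
      have h0 : Real.exp (-L) * Real.exp L = 1 := by rw [← Real.exp_add]; simp
      have h1' : (-L + 1) * Real.exp L ≤ Real.exp (-L) * Real.exp L :=
        mul_le_mul_of_nonneg_right (Real.add_one_le_exp (-L)) (Real.exp_pos L).le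
      rw [h0] at h1'
      have h1 : Real.exp L - 1 ≤ 2*L := by
        have hx1 : Real.exp L - 1 ≤ L * Real.exp L := by linarith [h1']
        have hx2 : L * Real.exp L ≤ L * 2 := mul_le_mul_of_nonneg_left hexpL hL0.le
        linarith [hx1, hx2]
      calc 4*(ε*M₂)*h^2/L*(Real.exp L - 1) ≤ 4*(ε*M₂)*h^2/L*(2*L) := by
            apply mul_le_mul_of_nonneg_left h1
            positivity
        _ = 8*(ε*M₂)*h^2 := by field_simp; ring
    exact hgron.trans hgb
  -- the Poincaré map and its derivatives
  set ψ : ℝ → ℝ := fun t => S.ysol ε 0 t 1 with hψdef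
  have hψC : ContDiff ℝ ∞ ψ := by
    have h0 : ψ = (fun p : ℝ × ℝ => S.ysol ε p.1 p.2 1) ∘ (fun t => ((0:ℝ), t)) := rfl
    rw [h0]
    exact ((S.ysol_smooth ε 1 hε0).of_le (by simp)).comp (contDiff_const.prodMk contDiff_id)
  have hψd : Differentiable ℝ ψ := hψC.differentiable hle1
  have hψ'C : ContDiff ℝ ∞ (deriv ψ) := (contDiff_infty_iff_deriv.mp hψC).2
  have hψ'd : Differentiable ℝ (deriv ψ) := hψ'C.differentiable hle1
  have hψ''c : Continuous (deriv (deriv ψ)) :=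
    ((contDiff_infty_iff_deriv.mp hψ'C).2).continuous
  constructor
  · -- first derivative bound
    have main : ∀ η > 0, 3/4 ≤ deriv ψ y₀ + η := by
      intro η hη
      obtain ⟨δ, hδ0, hδ⟩ := Metric.continuousAt_iff.mp (hψ'C.continuous.continuousAt (x := y₀)) η hη
      set h := min (δ/2) (-(ε^ν) - y₀) with hhdef
      clear_value h
      have hh0 : 0 < h := by rw [hhdef]; exact lt_min (by linarith) (by linarith)
      have hyp : y₀ + h ≤ -(ε^ν) := by
        have := min_le_right (δ/2) (-(ε^ν) - y₀); rw [← hhdef] at this; linarith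
      have hhδ : h ≤ δ/2 := by rw [hhdef]; exact min_le_left _ _
      have hy₀m : y₀ ∈ Icc a (-(ε^ν)) := ⟨hy₀a.le, hy₀ν.le⟩
      have hypm : y₀ + h ∈ Icc a (-(ε^ν)) := ⟨by linarith, hyp⟩
      set p : ℝ → ℝ := fun x => S.ysol ε 0 (y₀+h) x - S.ysol ε 0 y₀ x with hpdef
      clear_value p
      have hrev : ∀ x ∈ Icc (0:ℝ) 1, h ≤ |p x| * Real.exp (L*x) := by
        intro x hxm
        have h1 := (key1 (y₀+h) hypm y₀ hy₀m x hxm).2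
        rw [add_sub_cancel_left, abs_of_pos hh0] at h1
        rw [hpdef]
        exact h1
      have hpne : ∀ x ∈ Icc (0:ℝ) 1, p x ≠ 0 := by
        intro x hxm hc
        have := hrev x hxm
        rw [hc, abs_zero, zero_mul] at this
        linarith
      have hpder : ∀ t, HasDerivAt p
          (ε * S.w t (S.ysol ε 0 (y₀+h) t) ε - ε * S.w t (S.ysol ε 0 y₀ t) ε) t := by
        rw [hpdef]
        exact fun t => (S.ysol_ode ε 0 (y₀+h) t hε0).sub (S.ysol_ode ε 0 y₀ t hε0)
      have hpcont : ContinuousOn p (Icc (0:ℝ) 1) :=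
        fun x _ => (hpder x).continuousAt.continuousWithinAt
      have hp0 : p 0 = h := by simp [hpdef, S.ysol_init]
      have hp1pos : 0 < p 1 := by
        by_contra hle
        push_neg at hle
        have hne := hpne 1 ⟨zero_le_one, le_rfl⟩
        have hlt : p 1 < 0 := lt_of_le_of_ne hle hne
        have hiv := intermediate_value_Icc' (zero_le_one) hpcont
          (show (0:ℝ) ∈ Icc (p 1) (p 0) from ⟨hlt.le, by rw [hp0]; exact hh0.le⟩)
        obtain ⟨x, hxm, hx0⟩ := hiv
        exact hpne x hxm hx0
      have hplow : h * (3/4) ≤ p 1 := by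
        have h1 := hrev 1 ⟨zero_le_one, le_rfl⟩
        rw [abs_of_pos hp1pos, mul_one] at h1
        have hexpneg : 1 - L ≤ Real.exp (-L) := by
          have := Real.add_one_le_exp (-L); linarith
        have h3 : p 1 * Real.exp L * Real.exp (-L) = p 1 := by
          rw [mul_assoc, ← Real.exp_add]; simp
        have h2 : h * Real.exp (-L) ≤ p 1 := by
          have h4 := mul_le_mul_of_nonneg_right h1 (Real.exp_pos (-L)).le
          rwa [h3] at h4
        have hx1 : h*(1-L) ≤ h*Real.exp (-L) := mul_le_mul_of_nonneg_left hexpneg hh0.le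
        have hx2 : h*(3/4) ≤ h*(1-L) :=
          mul_le_mul_of_nonneg_left (by linarith : (3:ℝ)/4 ≤ 1 - L) hh0.le
        linarith [hx1, hx2, h2]
      set c : ℝ := deriv ψ y₀ + η with hcdef
      clear_value c
      have hmono : AntitoneOn (fun s => ψ s - c*s) (Icc y₀ (y₀+h)) := by
        apply antitoneOn_of_deriv_nonpos (convex_Icc _ _)
        · exact ((hψd.sub (differentiable_id.const_mul c)).continuous).continuousOn
        · exact (hψd.sub (differentiable_id.const_mul c)).differentiableOn
        · intro x hx
          rw [interior_Icc] at hx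
          have hderx : deriv (fun s => ψ s - c*s) x = deriv ψ x - c := by
            have hh : HasDerivAt (fun s => ψ s - c*s) (deriv ψ x - c*1) x :=
              ((hψd x).hasDerivAt).sub ((hasDerivAt_id x).const_mul c)
            rw [hh.deriv]; ring
          rw [hderx]
          have hdist : dist x y₀ < δ := by
            rw [Real.dist_eq, abs_of_pos (by linarith [hx.1] : (0:ℝ) < x - y₀)]
            have := hx.2; linarith
          have hd := hδ hdist
          rw [Real.dist_eq] at hd
          have := (abs_lt.mp hd).2
          rw [hcdef]; linarith
      have hm := hmono (left_mem_Icc.mpr (by linarith)) (right_mem_Icc.mpr (by linarith))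
        (by linarith)
      simp only [] at hm
      have hp1 : p 1 = ψ (y₀+h) - ψ y₀ := by simp only [hpdef, hψdef]
      have hup : p 1 ≤ c*h := by
        rw [hp1]; linarith [hm]
      have hfin : 3/4 ≤ c :=
        le_of_mul_le_mul_right (by linarith [hplow, hup] : (3:ℝ)/4 * h ≤ c * h) hh0
      exact hfin
    have h34 : (3:ℝ)/4 ≤ deriv ψ y₀ := by
      by_contra hcon
      push_neg at hcon
      have := main ((3/4 - deriv ψ y₀)/2) (by linarith)
      linarith
    linarith
  · -- second derivative bound
    have main : ∀ η > 0, deriv (deriv ψ) y₀ - η ≤ 8*(ε*M₂) := by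
      intro η hη
      obtain ⟨δ, hδ0, hδ⟩ := Metric.continuousAt_iff.mp (hψ''c.continuousAt (x := y₀)) η hη
      set h := min (δ/2) (min (y₀ - a) (-(ε^ν) - y₀)) with hhdef
      clear_value h
      have hh0 : 0 < h := by
        rw [hhdef]; exact lt_min (by linarith) (lt_min (by linarith) (by linarith))
      have hhδ : h ≤ δ/2 := by rw [hhdef]; exact min_le_left _ _
      have hha : a ≤ y₀ - h := by
        have h1 : h ≤ y₀ - a := by
          rw [hhdef]; exact le_trans (min_le_right _ _) (min_le_left _ _)
        linarith
      have hhb : y₀ + h ≤ -(ε^ν) := by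
        have h1 : h ≤ -(ε^ν) - y₀ := by
          rw [hhdef]; exact le_trans (min_le_right _ _) (min_le_right _ _)
        linarith
      have hball : ∀ z ∈ Icc (y₀-h) (y₀+h), deriv (deriv ψ) y₀ - η ≤ deriv (deriv ψ) z := by
        intro z hz
        have hdist : dist z y₀ < δ := by
          rw [Real.dist_eq]
          have : |z - y₀| ≤ h := abs_le.mpr ⟨by linarith [hz.1], by linarith [hz.2]⟩
          linarith
        have hd := hδ hdist
        rw [Real.dist_eq] at hd
        have := (abs_lt.mp hd).1
        linarith
      set c' : ℝ := deriv (deriv ψ) y₀ - η with hc'def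
      clear_value c'
      have hmono1 : MonotoneOn (fun s => deriv ψ s - c'*s) (Icc (y₀-h) (y₀+h)) := by
        apply monotoneOn_of_deriv_nonneg (convex_Icc _ _)
        · exact ((hψ'C.continuous.sub (continuous_const.mul continuous_id : Continuous fun s : ℝ => c' * s))).continuousOn
        · exact (hψ'd.sub (differentiable_id.const_mul c')).differentiableOn
        · intro x hx
          rw [interior_Icc] at hx
          have hderx : deriv (fun s => deriv ψ s - c'*s) x = deriv (deriv ψ) x - c' := by
            have hh : HasDerivAt (fun s => deriv ψ s - c'*s) (deriv (deriv ψ) x - c'*1) x :=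
              ((hψ'd x).hasDerivAt).sub ((hasDerivAt_id x).const_mul c')
            rw [hh.deriv]; ring
          rw [hderx]
          have := hball x ⟨hx.1.le, hx.2.le⟩
          rw [hc'def]; linarith
      have hstep : ∀ t ∈ Icc (0:ℝ) h, c'*(2*t) ≤ deriv ψ (y₀+t) - deriv ψ (y₀-t) := by
        intro t ht
        have h1 := hmono1 (show y₀ - t ∈ Icc (y₀-h) (y₀+h) from
            ⟨by linarith [ht.2], by linarith [ht.1]⟩)
          (show y₀ + t ∈ Icc (y₀-h) (y₀+h) from ⟨by linarith [ht.2, ht.1], by linarith [ht.2]⟩)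
          (by linarith [ht.1])
        simp only [] at h1
        linarith [h1]
      have hGder : ∀ t, HasDerivAt (fun s => ψ (y₀+s) + ψ (y₀-s) - c'*s^2)
          (deriv ψ (y₀+t) - deriv ψ (y₀-t) - c'*(2*t)) t := by
        intro t
        have h1 : HasDerivAt (fun s => ψ (y₀+s)) (deriv ψ (y₀+t) * 1) t :=
          HasDerivAt.comp t ((hψd (y₀+t)).hasDerivAt) ((hasDerivAt_id t).const_add y₀)
        have h2 : HasDerivAt (fun s => ψ (y₀-s)) (deriv ψ (y₀-t) * (-1)) t :=
          HasDerivAt.comp t ((hψd (y₀-t)).hasDerivAt) ((hasDerivAt_id t).const_sub y₀)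
        have h3 : HasDerivAt (fun s : ℝ => c'*s^2) (c'*(2*t)) t := by
          have hp := (hasDerivAt_pow 2 t).const_mul c'
          exact hp.congr_deriv (by simp)
        have := (h1.add h2).sub h3
        exact this.congr_deriv (by ring)
      have hmono2 : MonotoneOn (fun s => ψ (y₀+s) + ψ (y₀-s) - c'*s^2) (Icc 0 h) := by
        apply monotoneOn_of_deriv_nonneg (convex_Icc _ _)
        · exact fun x _ => (hGder x).continuousAt.continuousWithinAt
        · exact fun x hx => ((hGder x).differentiableAt).differentiableWithinAt
        · intro x hx
          rw [interior_Icc] at hx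
          rw [(hGder x).deriv]
          have := hstep x ⟨hx.1.le, hx.2.le⟩
          linarith
      have hm2 := hmono2 (left_mem_Icc.mpr hh0.le) (right_mem_Icc.mpr hh0.le) hh0.le
      norm_num at hm2
      -- hm2 : ψ y₀ + ψ y₀ - c'*0^2 ≤ ψ (y₀+h) + ψ (y₀-h) - c'*h^2
      have hq1 := key2 h hh0.le hha hhb
      have hle : c' * h^2 ≤ 8*(ε*M₂)*h^2 := by
        have hq1' : ψ (y₀+h) - 2*ψ y₀ + ψ (y₀-h) ≤ 8*(ε*M₂)*h^2 := by
          simp only [hψdef]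
          exact (le_abs_self _).trans hq1
        linarith [hm2, hq1']
      have : c' ≤ 8*(ε*M₂) :=
        le_of_mul_le_mul_right (by linarith [hle] : c' * h^2 ≤ 8*(ε*M₂) * h^2) (pow_pos hh0 2)
      rw [hc'def] at this; linarith
    have hfin : deriv (deriv ψ) y₀ ≤ 8*(ε*M₂) := by
      by_contra hcon
      push_neg at hcon
      have := main ((deriv (deriv ψ) y₀ - 8*(ε*M₂))/2) (by linarith)
      linarith
    have hid : 8*(ε*M₂) = 2048*C₂*ε^(1-4*ν) := by
      rw [hM₂def, hεpow4, Real.rpow_sub hε0, Real.rpow_one]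
      ring
    rw [hid] at hfin
    exact hfin
end
end

section
/- Fix ν ∈ (0, 1/4). Let γ_ε : Γ_ε → J_N be the correspondence map along trajectories from Γ_ε = {y = −ε^ν} to J_N ⊂ Σ, defined in reverse time on [0, τ) and in forward time on [τ, 1), where τ is the intersection of Γ_ε with the trajectory through (0, a). Then for every point x₀ ≠ τ of Γ_ε, |ln |γ_ε'(x₀)|| < C·ε^{ν−1} for some constant C > 0 independent of ε, for all sufficiently small ε > 0. -/
noncomputable section

open Real Set Filter Topology

lemma aux_eps_pow {β c : ℝ} (hβ : 0 < β) (hc : 0 < c) :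
    ∃ d : ℝ, 0 < d ∧ ∀ ε : ℝ, 0 < ε → ε ≤ d → ε ^ β ≤ c := by
  refine ⟨(min c 1) ^ (β⁻¹), Real.rpow_pos_of_pos (lt_min hc one_pos) _, fun ε hε hεd => ?_⟩
  calc ε ^ β ≤ ((min c 1) ^ (β⁻¹)) ^ β := Real.rpow_le_rpow hε.le hεd hβ.le
    _ = min c 1 := by
        rw [← Real.rpow_mul (le_of_lt (lt_min hc one_pos)), inv_mul_cancel₀ hβ.ne',
          Real.rpow_one]
    _ ≤ c := min_le_left _ _

lemma aux_gron {z z' : ℝ → ℝ} {K p q : ℝ} (hz : ∀ s, HasDerivAt z (z' s) s)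
    (hpq : p ≤ q) (hbd : ∀ s ∈ Icc p q, |z' s| ≤ K * |z s|) :
    |z q| ≤ exp (K * (q - p)) * |z p| := by
  have h := norm_le_gronwallBound_of_norm_deriv_right_le (f := z) (f' := z')
    (δ := ‖z p‖) (K := K) (ε := 0) (a := p) (b := q)
    (fun s _ => (hz s).continuousAt.continuousWithinAt)
    (fun s _ => (hz s).hasDerivWithinAt) le_rfl
    (fun s hs => by
      simpa [Real.norm_eq_abs] using hbd s ⟨hs.1, hs.2.le⟩)
  have h2 := h q ⟨hpq, le_rfl⟩
  rw [gronwallBound_ε0] at h2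
  simpa [Real.norm_eq_abs, mul_comm] using h2

lemma aux_gron2 {z z' : ℝ → ℝ} {K p q : ℝ} (hz : ∀ s, HasDerivAt z (z' s) s)
    (hpq : p ≤ q) (hbd : ∀ s ∈ Icc p q, |z' s| ≤ K * |z s|) :
    |z q| ≤ exp (K * (q - p)) * |z p| ∧ |z p| ≤ exp (K * (q - p)) * |z q| := by
  refine ⟨aux_gron hz hpq hbd, ?_⟩
  have hz2 : ∀ u, HasDerivAt (fun u => z (p + q - u)) (-(z' (p + q - u))) u := by
    intro u
    have h1 : HasDerivAt (fun u : ℝ => p + q - u) (-1) u := (hasDerivAt_id u).const_sub (p + q)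
    exact ((hz (p + q - u)).comp u h1).congr_deriv (by ring)
  have hbd2 : ∀ s ∈ Icc p q, |(fun u => -(z' (p + q - u))) s| ≤ K * |z (p + q - s)| := by
    intro s hs
    have hm : p + q - s ∈ Icc p q := ⟨by linarith [hs.2], by linarith [hs.1]⟩
    simpa [abs_neg] using hbd _ hm
  have := aux_gron (z := fun u => z (p + q - u)) (z' := fun u => -(z' (p + q - u)))
    hz2 hpq hbd2
  simpa [add_sub_cancel_right, add_sub_cancel_left] using this

lemma aux_lip (S : WSys) (a : ℝ) :
    ∃ L : ℝ, 0 ≤ L ∧ ∀ x ∈ Icc (0:ℝ) 1, ∀ e ∈ Icc (0:ℝ) 1, ∀ y ∈ Icc a 0, ∀ y' ∈ Icc a 0,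
      |S.w x y e - S.w x y' e| ≤ L * |y - y'| := by
  set F : ℝ × ℝ × ℝ → ℝ := fun p => S.w p.1 p.2.1 p.2.2 with hF
  set Q : Set (ℝ × ℝ × ℝ) := Icc (0:ℝ) 1 ×ˢ Icc a 0 ×ˢ Icc (0:ℝ) 1 with hQ
  have hQc : IsCompact Q := isCompact_Icc.prod (isCompact_Icc.prod isCompact_Icc)
  have hQconv : Convex ℝ Q := (convex_Icc _ _).prod ((convex_Icc _ _).prod (convex_Icc _ _))
  have hFd : Differentiable ℝ F := S.smooth.differentiable (by simp)
  obtain ⟨M, hM⟩ := hQc.exists_bound_of_continuousOn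
    ((S.smooth.continuous_fderiv (by simp)).continuousOn (s := Q))
  refine ⟨max M 0, le_max_right _ _, ?_⟩
  intro x hx e he y hy y' hy'
  have h1 : ‖F (x, y, e) - F (x, y', e)‖ ≤ max M 0 * ‖((x, y, e) : ℝ × ℝ × ℝ) - (x, y', e)‖ :=
    hQconv.norm_image_sub_le_of_norm_fderiv_le (fun p _ => hFd p)
      (fun p hp => (hM p hp).trans (le_max_left _ _)) ⟨hx, hy', he⟩ ⟨hx, hy, he⟩
  have h2 : ‖((x, y, e) : ℝ × ℝ × ℝ) - (x, y', e)‖ = |y - y'| := by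
    simp only [Prod.mk_sub_mk, sub_self, Prod.norm_def, Real.norm_eq_abs, abs_zero]
    rw [max_eq_right, max_eq_left (abs_nonneg _)]
    exact le_max_of_le_left (abs_nonneg _)
  rw [h2] at h1
  simpa [F] using h1


set_option maxHeartbeats 1000000

/-- Proposition 5.13.  Fix `ν ∈ (0, 1/4)`.  Let
`γ_ε : Γ_ε → J_N ⊂ Σ` be the correspondence map along trajectories from
`Γ_ε = {y = -ε^ν}` to `Σ = {x = 0} = {x = 1}`, defined in reverse time on
`[0, τ)` (i.e. `x₀ ↦ ysol ε x₀ (-ε^ν) 0`) and in forward time on `[τ, 1)`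
(i.e. `x₀ ↦ ysol ε x₀ (-ε^ν) 1`), where `τ = τ(ε)` is the intersection of
`Γ_ε` with the trajectory through `(0, a)`.  Then for every `x₀ ≠ τ`,
`|ln |γ_ε'(x₀)|| < C ε^{ν-1}` for all sufficiently small `ε > 0`, with `C`
independent of `ε`. -/
theorem statement18 (S : WSys)
    (a cw Cw K : ℝ) (ha : a < 0) (hcw : 0 < cw) (hCw : 0 < Cw) (hK : 0 < K)
    (hb : ∀ x y ε : ℝ, 0 < ε → a ≤ y → y + K * ε < 0 →
      cw < S.w x y ε ∧ S.w x y ε < -(Cw / (y + K * ε)))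
    (ν : ℝ) (hν : ν ∈ Ioo (0:ℝ) (1/4))
    (τ : ℝ → ℝ)
    -- `τ ε` is the (mod 1) intersection of `Γ_ε` with the trajectory through `(0, a)`:
    (hτ : ∀ ε : ℝ, 0 < ε → τ ε ∈ Ico (0:ℝ) 1 ∧
      ∃ X : ℝ, S.ysol ε 0 a X = -(ε ^ ν) ∧ τ ε = Int.fract X)
    -- trajectories starting on `Γ_ε` stay in the strip
    -- `{-(3/2) ε^ν < y < -(1/2) ε^ν}` until they cross `Σ`:
    (hconf : ∀ ε : ℝ, 0 < ε → ∀ x₀ ∈ Icc (0:ℝ) 1, ∀ x ∈ Icc (0:ℝ) 1,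
      -(3/2 * ε ^ ν) < S.ysol ε x₀ (-(ε ^ ν)) x ∧
      S.ysol ε x₀ (-(ε ^ ν)) x < -(1/2 * ε ^ ν)) :
    ∃ C : ℝ, 0 < C ∧ ∃ ε₀ : ℝ, 0 < ε₀ ∧
      ∀ ε ∈ Ioc (0:ℝ) ε₀,
        -- forward-time branch, on `(τ, 1)`:
        (∀ x₀ ∈ Ioo (τ ε) 1,
          |Real.log (abs (deriv (fun t => S.ysol ε t (-(ε ^ ν)) 1) x₀))|
            < C * ε ^ (ν - 1)) ∧
        -- reverse-time branch, on `[0, τ)`: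
        (∀ x₀ ∈ Ico (0:ℝ) (τ ε),
          |Real.log (abs (deriv (fun t => S.ysol ε t (-(ε ^ ν)) 0) x₀))|
            < C * ε ^ (ν - 1)) := by
  obtain ⟨L, hL0, hLip⟩ := aux_lip S a
  have hν0 : 0 < ν := hν.1
  have hν1 : ν < 1 := lt_trans hν.2 (by norm_num)
  have h1ν : 0 < 1 - ν := by linarith
  have hC : 0 < L + |Real.log cw| + 1 / (1 - ν) + 1 := by
    have h1 := abs_nonneg (Real.log cw)
    have h2 : 0 < 1 / (1 - ν) := by positivity
    linarith
  obtain ⟨d₁, hd₁, hd₁p⟩ := aux_eps_pow hν0 (show (0:ℝ) < -a * (2/3) by linarith)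
  obtain ⟨d₂, hd₂, hd₂p⟩ := aux_eps_pow h1ν (show (0:ℝ) < (4*K)⁻¹ by positivity)
  obtain ⟨d₃, hd₃, hd₃p⟩ := aux_eps_pow h1ν
    (show (0:ℝ) < (Real.exp L * (4*Cw))⁻¹ by positivity)
  refine ⟨L + |Real.log cw| + 1 / (1 - ν) + 1, hC, min 1 (min d₁ (min d₂ d₃)), by positivity, ?_⟩
  rintro ε ⟨hε, hεε₀⟩
  have hε1 : ε ≤ 1 := hεε₀.trans (min_le_left _ _)
  have hεd₁ : ε ≤ d₁ := hεε₀.trans ((min_le_right _ _).trans (min_le_left _ _))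
  have hεd₂ : ε ≤ d₂ :=
    hεε₀.trans ((min_le_right _ _).trans ((min_le_right _ _).trans (min_le_left _ _)))
  have hεd₃ : ε ≤ d₃ :=
    hεε₀.trans ((min_le_right _ _).trans ((min_le_right _ _).trans (min_le_right _ _)))
  have hεν : ε ^ ν ≤ -a * (2/3) := hd₁p ε hε hεd₁
  have hεK : ε ^ (1 - ν) ≤ (4*K)⁻¹ := hd₂p ε hε hεd₂
  have hεhi : ε ^ (1 - ν) ≤ (Real.exp L * (4*Cw))⁻¹ := hd₃p ε hε hεd₃
  have hεν0 : 0 < ε ^ ν := Real.rpow_pos_of_pos hε ν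
  have hε1ν0 : 0 < ε ^ (1 - ν) := Real.rpow_pos_of_pos hε _
  set y₀ : ℝ := -(ε ^ ν) with hy₀
  -- bounds on w in the strip
  have hwB : ∀ x y : ℝ, -(3/2 * ε ^ ν) < y → y < -(1/2 * ε ^ ν) →
      (cw * ε ≤ ε * S.w x y ε ∧ ε * S.w x y ε ≤ 4 * Cw * ε ^ (1 - ν)) ∧ a ≤ y ∧ y ≤ 0 := by
    intro x y hy1 hy2
    have hay : a ≤ y := by linarith
    have hy0 : y ≤ 0 := by linarith
    have hsplit : ε ^ ν * ε ^ (1 - ν) = ε := by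
      rw [← Real.rpow_add hε, show ν + (1 - ν) = 1 by ring, Real.rpow_one]
    have hKε : K * ε ≤ ε ^ ν / 4 := by
      have h1 : ε ≤ ε ^ ν * (4*K)⁻¹ := by
        calc ε = ε ^ ν * ε ^ (1 - ν) := hsplit.symm
          _ ≤ ε ^ ν * (4*K)⁻¹ := mul_le_mul_of_nonneg_left hεK hεν0.le
      have h2 : K * (ε ^ ν * (4*K)⁻¹) = ε ^ ν / 4 := by field_simp
      calc K * ε ≤ K * (ε ^ ν * (4*K)⁻¹) := mul_le_mul_of_nonneg_left h1 hK.le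
        _ = ε ^ ν / 4 := h2
    have hyK : y + K * ε < 0 := by linarith
    obtain ⟨hwl, hwu⟩ := hb x y ε hε hay hyK
    refine ⟨⟨by nlinarith, ?_⟩, hay, hy0⟩
    have hden : ε ^ ν / 4 ≤ -(y + K * ε) := by linarith
    have hpos : (0:ℝ) < ε ^ ν / 4 := by positivity
    have hwu2 : S.w x y ε ≤ Cw / (ε ^ ν / 4) := by
      have e1 : -(Cw / (y + K * ε)) = Cw / (-(y + K * ε)) := by
        rw [div_neg]
      have e2 : Cw / (-(y + K * ε)) ≤ Cw / (ε ^ ν / 4) := by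
        gcongr
      linarith [hwu, e1 ▸ hwu]
    have e3 : ε * (Cw / (ε ^ ν / 4)) = 4 * Cw * ε ^ (1 - ν) := by
      rw [show (1:ℝ) - ν = 1 + (-ν) by ring, Real.rpow_add hε, Real.rpow_one,
        Real.rpow_neg hε.le]
      field_simp
    calc ε * S.w x y ε ≤ ε * (Cw / (ε ^ ν / 4)) := mul_le_mul_of_nonneg_left hwu2 hε.le
      _ = 4 * Cw * ε ^ (1 - ν) := e3
  -- the slope bound
  have slope_bd : ∀ xb ∈ Icc (0:ℝ) 1, ∀ t ∈ Icc (0:ℝ) 1, ∀ x₀ ∈ Icc (0:ℝ) 1, t ≠ x₀ →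
      Real.exp (-L) * (cw * ε) ≤
        |(S.ysol ε t y₀ xb - S.ysol ε x₀ y₀ xb) / (t - x₀)| ∧
      |(S.ysol ε t y₀ xb - S.ysol ε x₀ y₀ xb) / (t - x₀)| ≤
        Real.exp L * (4 * Cw * ε ^ (1 - ν)) := by
    intro xb hxb t ht x₀ hx₀ htx
    set z : ℝ → ℝ := fun s => S.ysol ε t y₀ s - S.ysol ε x₀ y₀ s with hzdef
    set z' : ℝ → ℝ := fun s =>
      ε * S.w s (S.ysol ε t y₀ s) ε - ε * S.w s (S.ysol ε x₀ y₀ s) ε with hz'def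
    have hz : ∀ s, HasDerivAt z (z' s) s := fun s =>
      (S.ysol_ode ε t y₀ s hε).sub (S.ysol_ode ε x₀ y₀ s hε)
    have hbd : ∀ s ∈ Icc (0:ℝ) 1, |z' s| ≤ L * |z s| := by
      intro s hs
      have hst := hconf ε hε t ht s hs
      have hsx := hconf ε hε x₀ hx₀ s hs
      have hmt := (hwB s _ hst.1 hst.2).2
      have hmx := (hwB s _ hsx.1 hsx.2).2
      have h1 := hLip s hs ε ⟨hε.le, hε1⟩ _ ⟨hmt.1, hmt.2⟩ _ ⟨hmx.1, hmx.2⟩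
      have e1 : |z' s| = ε * |S.w s (S.ysol ε t y₀ s) ε - S.w s (S.ysol ε x₀ y₀ s) ε| := by
        rw [show z' s = ε * (S.w s (S.ysol ε t y₀ s) ε - S.w s (S.ysol ε x₀ y₀ s) ε) by
          simp [hz'def]; ring, abs_mul, abs_of_pos hε]
      rw [e1]
      calc ε * |S.w s (S.ysol ε t y₀ s) ε - S.w s (S.ysol ε x₀ y₀ s) ε|
          ≤ ε * (L * |S.ysol ε t y₀ s - S.ysol ε x₀ y₀ s|) :=
            mul_le_mul_of_nonneg_left h1 hε.le
        _ ≤ L * |z s| := by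
            have : (0:ℝ) ≤ L * |z s| := by positivity
            nlinarith
    -- MVT: value of z at x₀
    obtain ⟨u, hu1, hu2, huz⟩ : ∃ u : ℝ, cw * ε ≤ u ∧ u ≤ 4 * Cw * ε ^ (1 - ν) ∧
        z x₀ = u * (x₀ - t) := by
      have hcont : ∀ p q : ℝ, ContinuousOn (S.ysol ε t y₀) (Icc p q) :=
        fun p q => fun s _ => (S.ysol_ode ε t y₀ s hε).continuousAt.continuousWithinAt
      have hode : ∀ s, HasDerivAt (S.ysol ε t y₀) (ε * S.w s (S.ysol ε t y₀ s) ε) s :=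
        fun s => S.ysol_ode ε t y₀ s hε
      have hzx : z x₀ = S.ysol ε t y₀ x₀ - S.ysol ε t y₀ t := by
        simp [hzdef, S.ysol_init]
      rcases lt_or_gt_of_ne htx with h | h
      · obtain ⟨c, hc, hceq⟩ := exists_hasDerivAt_eq_slope (S.ysol ε t y₀)
          (fun s => ε * S.w s (S.ysol ε t y₀ s) ε) h (hcont t x₀) (fun s _ => hode s)
        have hcm : c ∈ Icc (0:ℝ) 1 := ⟨le_trans ht.1 hc.1.le, le_trans hc.2.le hx₀.2⟩
        have hstrip := hconf ε hε t ht c hcm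
        have hw := (hwB c _ hstrip.1 hstrip.2).1
        refine ⟨ε * S.w c (S.ysol ε t y₀ c) ε, hw.1, hw.2, ?_⟩
        rw [hzx]
        rw [eq_div_iff (sub_ne_zero.2 (ne_of_gt h))] at hceq
        linarith [hceq]
      · obtain ⟨c, hc, hceq⟩ := exists_hasDerivAt_eq_slope (S.ysol ε t y₀)
          (fun s => ε * S.w s (S.ysol ε t y₀ s) ε) h (hcont x₀ t) (fun s _ => hode s)
        have hcm : c ∈ Icc (0:ℝ) 1 := ⟨le_trans hx₀.1 hc.1.le, le_trans hc.2.le ht.2⟩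
        have hstrip := hconf ε hε t ht c hcm
        have hw := (hwB c _ hstrip.1 hstrip.2).1
        refine ⟨ε * S.w c (S.ysol ε t y₀ c) ε, hw.1, hw.2, ?_⟩
        rw [hzx]
        rw [eq_div_iff (sub_ne_zero.2 (ne_of_gt h))] at hceq
        linarith [hceq]
    have hu0 : 0 ≤ u := le_trans (by positivity) hu1
    have hzx0 : |z x₀| = u * |t - x₀| := by
      rw [huz, abs_mul, abs_of_nonneg hu0, abs_sub_comm]
    -- Gronwall both ways between x₀ and xb
    have pair : ∀ p q : ℝ, 0 ≤ p → p ≤ q → q ≤ 1 →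
        |z q| ≤ Real.exp L * |z p| ∧ |z p| ≤ Real.exp L * |z q| := by
      intro p q hp hpq hq
      have hg := aux_gron2 hz hpq (fun s hs => hbd s ⟨le_trans hp hs.1, le_trans hs.2 hq⟩)
      have hexp : Real.exp (L * (q - p)) ≤ Real.exp L := by
        apply Real.exp_le_exp.2
        nlinarith
      exact ⟨hg.1.trans (mul_le_mul_of_nonneg_right hexp (abs_nonneg _)),
        hg.2.trans (mul_le_mul_of_nonneg_right hexp (abs_nonneg _))⟩
    have hAB : |z xb| ≤ Real.exp L * |z x₀| ∧ |z x₀| ≤ Real.exp L * |z xb| := by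
      rcases le_total x₀ xb with h | h
      · exact pair x₀ xb hx₀.1 h hxb.2
      · exact (pair xb x₀ hxb.1 h hx₀.2).symm
    have ht0 : 0 < |t - x₀| := abs_pos.2 (sub_ne_zero.2 htx)
    have hslope : |(S.ysol ε t y₀ xb - S.ysol ε x₀ y₀ xb) / (t - x₀)| = |z xb| / |t - x₀| := by
      rw [abs_div]
    rw [hslope]
    constructor
    · rw [le_div_iff₀ ht0]
      have hB : u * |t - x₀| ≤ Real.exp L * |z xb| := hzx0 ▸ hAB.2
      have h5 : Real.exp (-L) * (u * |t - x₀|) ≤ Real.exp (-L) * (Real.exp L * |z xb|) :=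
        mul_le_mul_of_nonneg_left hB (Real.exp_pos _).le
      have h6 : Real.exp (-L) * (Real.exp L * |z xb|) = |z xb| := by
        rw [← mul_assoc, ← Real.exp_add, show -L + L = 0 by ring, Real.exp_zero, one_mul]
      rw [h6] at h5
      nlinarith [mul_le_mul_of_nonneg_right
        (mul_le_mul_of_nonneg_left hu1 (Real.exp_pos (-L)).le) ht0.le]
    · rw [div_le_iff₀ ht0]
      have hA : |z xb| ≤ Real.exp L * (u * |t - x₀|) := hzx0 ▸ hAB.1
      nlinarith [mul_le_mul_of_nonneg_right
        (mul_le_mul_of_nonneg_left hu2 (Real.exp_pos L).le) ht0.le]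
  -- derivative bound
  have deriv_bd : ∀ xb ∈ Icc (0:ℝ) 1, ∀ x₀ : ℝ, 0 ≤ x₀ → x₀ < 1 →
      Real.exp (-L) * (cw * ε) ≤ |deriv (fun t => S.ysol ε t y₀ xb) x₀| ∧
      |deriv (fun t => S.ysol ε t y₀ xb) x₀| ≤ Real.exp L * (4 * Cw * ε ^ (1 - ν)) := by
    intro xb hxb x₀ hx₀0 hx₀1
    set g : ℝ → ℝ := fun t => S.ysol ε t y₀ xb with hgdef
    have hgd : ContDiff ℝ (⊤ : ℕ∞) g :=
      (S.ysol_smooth ε xb hε).comp (contDiff_id.prodMk contDiff_const)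
    have hD : HasDerivAt g (deriv g x₀) x₀ := ((hgd.differentiable (by simp)) x₀).hasDerivAt
    rw [hasDerivAt_iff_tendsto_slope] at hD
    have hmono : 𝓝[>] x₀ ≤ 𝓝[≠] x₀ :=
      nhdsWithin_mono _ (fun y hy => Set.mem_compl_singleton_iff.2 (ne_of_gt hy))
    have hT : Tendsto (fun t => |slope g x₀ t|) (𝓝[>] x₀) (𝓝 |deriv g x₀|) :=
      (hD.mono_left hmono).abs
    have hev : ∀ᶠ t in 𝓝[>] x₀,
        Real.exp (-L) * (cw * ε) ≤ |slope g x₀ t| ∧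
        |slope g x₀ t| ≤ Real.exp L * (4 * Cw * ε ^ (1 - ν)) := by
      filter_upwards [Ioo_mem_nhdsGT_of_mem ⟨le_refl x₀, hx₀1⟩] with t htm
      have hsb := slope_bd xb hxb t ⟨le_trans hx₀0 htm.1.le, htm.2.le⟩ x₀ ⟨hx₀0, hx₀1.le⟩
        (ne_of_gt htm.1)
      rw [slope_def_field]
      exact hsb
    exact ⟨ge_of_tendsto hT (hev.mono fun t h => h.1),
      le_of_tendsto hT (hev.mono fun t h => h.2)⟩
  -- log bound
  have hrp : 0 < ε ^ (ν - 1) := Real.rpow_pos_of_pos hε _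
  have hlog : ∀ D : ℝ,
      Real.exp (-L) * (cw * ε) ≤ |D| → |D| ≤ Real.exp L * (4 * Cw * ε ^ (1 - ν)) →
      |Real.log (abs D)| < (L + |Real.log cw| + 1 / (1 - ν) + 1) * ε ^ (ν - 1) := by
    intro D h1 h2
    have hDpos : 0 < abs D := lt_of_lt_of_le (by positivity) h1
    have hhi1 : Real.exp L * (4 * Cw * ε ^ (1 - ν)) ≤ 1 := by
      calc Real.exp L * (4 * Cw * ε ^ (1 - ν))
          = (Real.exp L * (4 * Cw)) * ε ^ (1 - ν) := by ring
        _ ≤ (Real.exp L * (4 * Cw)) * (Real.exp L * (4 * Cw))⁻¹ :=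
            mul_le_mul_of_nonneg_left hεhi (by positivity)
        _ = 1 := mul_inv_cancel₀ (by positivity)
    have hD1 : abs D ≤ 1 := h2.trans hhi1
    have habs : |Real.log (abs D)| = -Real.log (abs D) :=
      abs_of_nonpos (Real.log_nonpos (abs_nonneg D) hD1)
    have hlb : Real.log (Real.exp (-L) * (cw * ε)) ≤ Real.log (abs D) :=
      Real.log_le_log (by positivity) h1
    have hexp : Real.log (Real.exp (-L) * (cw * ε)) = -L + (Real.log cw + Real.log ε) := by
      rw [Real.log_mul (Real.exp_ne_zero _) (by positivity), Real.log_exp,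
        Real.log_mul hcw.ne' hε.ne']
    rw [hexp] at hlb
    have hlogε : -Real.log ε * (1 - ν) ≤ ε ^ (ν - 1) := by
      have h4 : Real.log (ε ^ (ν - 1)) ≤ ε ^ (ν - 1) - 1 := Real.log_le_sub_one_of_pos hrp
      rw [Real.log_rpow hε] at h4
      nlinarith
    have hεν1 : 1 ≤ ε ^ (ν - 1) :=
      Real.one_le_rpow_of_pos_of_le_one_of_nonpos hε hε1 (by linarith)
    have hmain : |Real.log (abs D)| ≤ L - Real.log cw - Real.log ε := by
      rw [habs]; linarith
    have hfin : L - Real.log cw - Real.log ε ≤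
        L * ε ^ (ν - 1) + |Real.log cw| * ε ^ (ν - 1) + (1 / (1 - ν)) * ε ^ (ν - 1) := by
      have e1 : L ≤ L * ε ^ (ν - 1) := le_mul_of_one_le_right hL0 hεν1
      have e2 : -Real.log cw ≤ |Real.log cw| * ε ^ (ν - 1) :=
        le_trans (neg_le_abs _) (le_mul_of_one_le_right (abs_nonneg _) hεν1)
      have e3 : -Real.log ε ≤ (1 / (1 - ν)) * ε ^ (ν - 1) := by
        rw [div_mul_eq_mul_div, one_mul, le_div_iff₀ h1ν]
        exact hlogε
      nlinarith [e1, e2, e3]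
    have hceq : (L + |Real.log cw| + 1 / (1 - ν) + 1) * ε ^ (ν - 1)
        = L * ε ^ (ν - 1) + |Real.log cw| * ε ^ (ν - 1) + (1 / (1 - ν)) * ε ^ (ν - 1)
          + ε ^ (ν - 1) := by ring
    linarith [hmain, hfin, hrp, hceq]
  obtain ⟨hτ0, _⟩ := hτ ε hε
  constructor
  · intro x₀ hx₀
    exact hlog _ (deriv_bd 1 ⟨zero_le_one, le_refl 1⟩ x₀ (le_trans hτ0.1 hx₀.1.le) hx₀.2).1
      (deriv_bd 1 ⟨zero_le_one, le_refl 1⟩ x₀ (le_trans hτ0.1 hx₀.1.le) hx₀.2).2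
  · intro x₀ hx₀
    exact hlog _ (deriv_bd 0 ⟨le_refl 0, zero_le_one⟩ x₀ hx₀.1 (lt_trans hx₀.2 hτ0.2)).1
      (deriv_bd 0 ⟨le_refl 0, zero_le_one⟩ x₀ hx₀.1 (lt_trans hx₀.2 hτ0.2)).2
end
end
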